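/- For an exponential family on a compact parameter space Θ with b convex, twice differentiable, Lipschitz with constant L₁ on Θ, and with min_{θ∈Θ} b̈(θ) = 1/L₂ > 0, for any means μ, μ' in the image ḃ(Θ) and any ε > 0 with μ+ε ∈ ḃ(Θ): d_KL(μ+ε‖μ') − d_KL(μ‖μ') ≤ (L₁ + |μ|)·L₂·ε + ε·|ḃ⁻¹(μ') − ḃ⁻¹(μ+ε)| (hence the difference is O(ε)). -/
import Mathlib

open Real

/-- continuity of the exponential-family KL divergence in its first
argument.  With `d_KL(μ₁‖μ₂) = b(ḃ⁻¹(μ₂)) − b(ḃ⁻¹(μ₁)) − μ₁(ḃ⁻¹(μ₂) − ḃ⁻¹(μ₁))`,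
natural parameters `θμ = ḃ⁻¹(μ)`, `θμ' = ḃ⁻¹(μ')`, `θμε = ḃ⁻¹(μ+ε)` in the compact
parameter set `Θ`, `b` Lipschitz with constant `L₁` on `Θ`, and the inverse of `ḃ`
Lipschitz with constant `L₂` (i.e. `|θ−θ'| ≤ L₂ |ḃθ − ḃθ'|` on `Θ`), one has
`d_KL(μ+ε‖μ') − d_KL(μ‖μ') ≤ (L₁+|μ|) L₂ ε + ε |θμ' − θμε|`. -/
theorem dKL_perturbation_bound
    (Θ : Set ℝ) (hΘ : IsCompact Θ)
    (b : ℝ → ℝ) (hconv : ConvexOn ℝ Set.univ b)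
    (hb : ∀ θ : ℝ, DifferentiableAt ℝ b θ)
    (hb2 : ∀ θ : ℝ, DifferentiableAt ℝ (deriv b) θ)
    (L₁ L₂ : ℝ) (hL₁ : 0 ≤ L₁) (hL₂ : 0 < L₂)
    (hLip : ∀ θ ∈ Θ, ∀ θ' ∈ Θ, |b θ - b θ'| ≤ L₁ * |θ - θ'|)
    (hInvLip : ∀ θ ∈ Θ, ∀ θ' ∈ Θ, |θ - θ'| ≤ L₂ * |deriv b θ - deriv b θ'|)
    (μ μ' ε : ℝ) (hε : 0 < ε)
    (θμ θμ' θμε : ℝ) (hθμ : θμ ∈ Θ) (hθμ' : θμ' ∈ Θ) (hθμε : θμε ∈ Θ)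
    (hμ : deriv b θμ = μ) (hμ' : deriv b θμ' = μ') (hμε : deriv b θμε = μ + ε) :
    (b θμ' - b θμε - (μ + ε) * (θμ' - θμε)) - (b θμ' - b θμ - μ * (θμ' - θμ))
      ≤ (L₁ + |μ|) * L₂ * ε + ε * |θμ' - θμε| := by
  have h1 : |θμε - θμ| ≤ L₂ * ε := by
    have h := hInvLip θμε hθμε θμ hθμ
    rw [hμε, hμ] at h
    simpa [abs_of_pos hε] using h
  have h3 : b θμ - b θμε ≤ L₁ * |θμε - θμ| := by
    calc b θμ - b θμε ≤ |b θμ - b θμε| := le_abs_self _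
    _ ≤ L₁ * |θμ - θμε| := hLip θμ hθμ θμε hθμε
    _ = L₁ * |θμε - θμ| := by rw [abs_sub_comm]
  have h4 : μ * (θμε - θμ) ≤ |μ| * |θμε - θμ| := by
    calc μ * (θμε - θμ) ≤ |μ * (θμε - θμ)| := le_abs_self _
    _ = |μ| * |θμε - θμ| := abs_mul _ _
  have h5 : -(ε * (θμ' - θμε)) ≤ ε * |θμ' - θμε| := by
    have h := neg_abs_le (θμ' - θμε)
    nlinarith [abs_nonneg (θμ' - θμε)]
  have h6 : (L₁ + |μ|) * |θμε - θμ| ≤ (L₁ + |μ|) * (L₂ * ε) :=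
    mul_le_mul_of_nonneg_left h1 (by positivity)
  nlinarith [h3, h4, h5, h6]
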